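/- arXiv:1301.7525 — 7 statements merged into one kernel-verified Lean document; each statement's English description precedes it below -/
import Mathlib

section
/- With notation as follows: $q>0$, $\mu\in\mathbb{R}$, $\beta>0$; $W:[0,\infty)\to(0,\infty)$ continuous, strictly increasing, differentiable on $(0,\infty)$ (extended by $0$ on negatives); $Z(x)=1+q\int_0^xW$; $\overline Z(x)=\int_0^x Z$; $R(x)=\overline Z(x)-\mu/q$; $f(c_1,c_2) = -R(c_2-c_1)+(c_2-c_1-\beta-\mu/q)Z(c_2-c_1) - [(c_2-c_1-\beta-\mu/q)Z(c_2)-R(c_2)]W(c_2-c_1)/W(c_2)$ and $g(c_1,c_2)=1-Z(c_2-c_1)+Z(c_2)W(c_2-c_1)/W(c_2)$. Then for $0\le c_1<c_2$, the partial derivative in $c_2$ of $\bar v_{c_1,c_2} := f(c_1,c_2)/g(c_1,c_2)$ satisfies $\frac{\partial}{\partial c_2}\bar v_{c_1,c_2} = -\frac{G(c_1,c_2)}{g(c_1,c_2)}\frac{\partial}{\partial c_2}\frac{W(c_2-c_1)}{W(c_2)}$, where $\gamma(c_1,c_2)=\bar v_{c_1,c_2}+c_2-c_1-\beta-\mu/q$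 and $G(c_1,c_2)=\gamma(c_1,c_2)Z(c_2)-R(c_2)$, provided $g(c_1,c_2)\ne 0$. -/
open Set intervalIntegral

theorem stmt_3 (q μ β : ℝ) (hq : 0 < q) (hβ : 0 < β) (W : ℝ → ℝ)
    (hWcont : ContinuousOn W (Ici 0))
    (hWmono : StrictMonoOn W (Ici 0))
    (hWpos : ∀ x ≥ (0:ℝ), 0 < W x)
    (hWneg : ∀ x < (0:ℝ), W x = 0)
    (hWdiff : ∀ x ∈ Ioi (0:ℝ), DifferentiableAt ℝ W x)
    (Z Zbar R : ℝ → ℝ) (f g vbar γ G : ℝ → ℝ → ℝ)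
    (hZ : ∀ x, Z x = 1 + q * ∫ y in (0:ℝ)..x, W y)
    (hZbar : ∀ x, Zbar x = ∫ y in (0:ℝ)..x, Z y)
    (hR : ∀ x, R x = Zbar x - μ / q)
    (hf : ∀ c₁ c₂, f c₁ c₂ =
      -R (c₂ - c₁) + (c₂ - c₁ - β - μ / q) * Z (c₂ - c₁)
        - ((c₂ - c₁ - β - μ / q) * Z c₂ - R c₂) * (W (c₂ - c₁) / W c₂))
    (hg : ∀ c₁ c₂, g c₁ c₂ =
      1 - Z (c₂ - c₁) + Z c₂ * (W (c₂ - c₁) / W c₂))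
    (hvbar : ∀ c₁ c₂, vbar c₁ c₂ = f c₁ c₂ / g c₁ c₂)
    (hγ : ∀ c₁ c₂, γ c₁ c₂ = vbar c₁ c₂ + c₂ - c₁ - β - μ / q)
    (hG : ∀ c₁ c₂, G c₁ c₂ = γ c₁ c₂ * Z c₂ - R c₂)
    (c₁ c₂ : ℝ) (hc₁ : 0 ≤ c₁) (hc : c₁ < c₂)
    (hgne : g c₁ c₂ ≠ 0) :
    HasDerivAt (fun b => vbar c₁ b)
      (-(G c₁ c₂ / g c₁ c₂) * deriv (fun b => W (b - c₁) / W b) c₂) c₂ := by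
  have hc₂ : (0:ℝ) < c₂ := lt_of_le_of_lt hc₁ hc
  have hd : (0:ℝ) < c₂ - c₁ := sub_pos.mpr hc
  have hBne : W c₂ ≠ 0 := (hWpos c₂ hc₂.le).ne'
  have hWcont' : ContinuousOn W (Ioi 0) := fun x hx =>
    (hWdiff x hx).continuousAt.continuousWithinAt
  have hWint : ∀ x : ℝ, 0 ≤ x → IntervalIntegrable W MeasureTheory.volume 0 x := by
    intro x hx
    apply ContinuousOn.intervalIntegrable
    rw [uIcc_of_le hx]
    exact hWcont.mono Icc_subset_Ici_self
  have hprim : ∀ x : ℝ, 0 < x →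
      HasDerivAt (fun t => ∫ y in (0:ℝ)..t, W y) (W x) x := fun x hx =>
    intervalIntegral.integral_hasDerivAt_right (hWint x hx.le)
      (hWcont'.stronglyMeasurableAtFilter isOpen_Ioi x hx) (hWdiff x hx).continuousAt
  have hZfun : Z = fun x => 1 + q * ∫ y in (0:ℝ)..x, W y := funext hZ
  have hZD : ∀ x : ℝ, 0 < x → HasDerivAt Z (q * W x) x := by
    intro x hx
    rw [hZfun]
    exact ((hprim x hx).const_mul q).const_add 1
  have hZcont' : ContinuousOn Z (Ioi 0) := fun x hx =>
    (hZD x hx).continuousAt.continuousWithinAt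
  have hZint : ∀ x : ℝ, 0 ≤ x → IntervalIntegrable Z MeasureTheory.volume 0 x := by
    intro x hx
    apply ContinuousOn.intervalIntegrable
    rw [uIcc_of_le hx, hZfun]
    refine continuousOn_const.add (ContinuousOn.const_smul ?_ q)
    have : MeasureTheory.IntegrableOn W (uIcc 0 x) MeasureTheory.volume := by
      rw [uIcc_of_le hx]
      exact (hWcont.mono Icc_subset_Ici_self).integrableOn_Icc
    simpa [uIcc_of_le hx] using intervalIntegral.continuousOn_primitive_interval this
  have hZbarD : ∀ x : ℝ, 0 < x → HasDerivAt Zbar (Z x) x := by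
    intro x hx
    have : Zbar = fun t => ∫ y in (0:ℝ)..t, Z y := funext hZbar
    rw [this]
    exact intervalIntegral.integral_hasDerivAt_right (hZint x hx.le)
      (hZcont'.stronglyMeasurableAtFilter isOpen_Ioi x hx) (hZD x hx).continuousAt
  have hRD : ∀ x : ℝ, 0 < x → HasDerivAt R (Z x) x := by
    intro x hx
    have : R = fun t => Zbar t - μ / q := funext hR
    rw [this]
    exact (hZbarD x hx).sub_const _
  have hsub : HasDerivAt (fun b : ℝ => b - c₁) 1 c₂ := (hasDerivAt_id c₂).sub_const c₁
  have hZdc : HasDerivAt (fun b => Z (b - c₁)) (q * W (c₂ - c₁) * 1) c₂ :=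
    (hZD _ hd).comp c₂ hsub
  have hRdc : HasDerivAt (fun b => R (b - c₁)) (Z (c₂ - c₁) * 1) c₂ :=
    (hRD _ hd).comp c₂ hsub
  have hWdc : HasDerivAt (fun b => W (b - c₁)) (deriv W (c₂ - c₁) * 1) c₂ :=
    ((hWdiff _ hd).hasDerivAt).comp c₂ hsub
  have hWc : HasDerivAt W (deriv W c₂) c₂ := (hWdiff c₂ hc₂).hasDerivAt
  have hhdiff : DifferentiableAt ℝ (fun b => W (b - c₁) / W b) c₂ :=
    hWdc.differentiableAt.div hWc.differentiableAt hBne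
  set h' := deriv (fun b => W (b - c₁) / W b) c₂ with hh'def
  have hhD : HasDerivAt (fun b => W (b - c₁) / W b) h' c₂ := hhdiff.hasDerivAt
  have hlin : HasDerivAt (fun b : ℝ => b - c₁ - β - μ / q) 1 c₂ := by
    simpa using (((hasDerivAt_id c₂).sub_const c₁).sub_const β).sub_const (μ / q)
  have hF : HasDerivAt (fun b =>
      -R (b - c₁) + (b - c₁ - β - μ / q) * Z (b - c₁)
        - ((b - c₁ - β - μ / q) * Z b - R b) * (W (b - c₁) / W b))
      (-(Z (c₂ - c₁) * 1) + (1 * Z (c₂ - c₁) + (c₂ - c₁ - β - μ / q) * (q * W (c₂ - c₁) * 1))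
        - (((1 * Z c₂ + (c₂ - c₁ - β - μ / q) * (q * W c₂)) - Z c₂) * (W (c₂ - c₁) / W c₂)
          + ((c₂ - c₁ - β - μ / q) * Z c₂ - R c₂) * h')) c₂ :=
    (hRdc.neg.add (hlin.mul hZdc)).sub
      (((hlin.mul (hZD c₂ hc₂)).sub (hRD c₂ hc₂)).mul hhD)
  have hGd : HasDerivAt (fun b => 1 - Z (b - c₁) + Z b * (W (b - c₁) / W b))
      (0 - q * W (c₂ - c₁) * 1 + (q * W c₂ * (W (c₂ - c₁) / W c₂) + Z c₂ * h')) c₂ :=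
    ((hasDerivAt_const c₂ (1:ℝ)).sub hZdc).add ((hZD c₂ hc₂).mul hhD)
  have hfe : (fun b => f c₁ b) = fun b =>
      -R (b - c₁) + (b - c₁ - β - μ / q) * Z (b - c₁)
        - ((b - c₁ - β - μ / q) * Z b - R b) * (W (b - c₁) / W b) := funext fun b => hf c₁ b
  have hge : (fun b => g c₁ b) = fun b =>
      1 - Z (b - c₁) + Z b * (W (b - c₁) / W b) := funext fun b => hg c₁ b
  have hgne' : 1 - Z (c₂ - c₁) + Z c₂ * (W (c₂ - c₁) / W c₂) ≠ 0 := by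
    rw [← hg]; exact hgne
  have hdiv := hF.div hGd hgne'
  have hve : (fun b => vbar c₁ b) = fun b =>
      (-R (b - c₁) + (b - c₁ - β - μ / q) * Z (b - c₁)
        - ((b - c₁ - β - μ / q) * Z b - R b) * (W (b - c₁) / W b)) /
      (1 - Z (b - c₁) + Z b * (W (b - c₁) / W b)) := by
    funext b
    rw [hvbar, hf, hg]
  rw [hve]
  refine hdiv.congr_deriv (Eq.symm ?_)
  rw [hG, hγ, hvbar, hf, hg]
  have hqne : q ≠ 0 := hq.ne'
  set A := W (c₂ - c₁) with hA
  set B := W c₂ with hB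
  set Zd := Z (c₂ - c₁) with hZd'
  set ZC := Z c₂ with hZC'
  set Rd := R (c₂ - c₁) with hRd'
  set RC := R c₂ with hRC'
  have hAr : A = A / B * B := (div_mul_cancel₀ A hBne).symm
  set r := A / B with hr
  rw [hAr]
  field_simp
  ring
end

section
/- With the same notation as the previous statement ($W,Z,\overline Z,R,f,g,\bar v,\gamma,G$ as above, $W$ differentiable on $(0,\infty)$), define $H(c_1,c_2) := q[\gamma(c_1,c_2)W(c_2-c_1) - \int_0^{c_2-c_1}W(y)dy]$. Then for $0<c_1<c_2$ with $g(c_1,c_2)\ne0$, $\frac{\partial}{\partial c_1}(\bar v_{c_1,c_2}-c_1) = \frac{1}{g(c_1,c_2)}\left[-H(c_1,c_2) + G(c_1,c_2)\frac{W'(c_2-c_1)}{W(c_2)}\right]$. -/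
open Set intervalIntegral

set_option maxHeartbeats 1000000 in
theorem stmt_4 (q μ β : ℝ) (hq : 0 < q) (hβ : 0 < β) (W : ℝ → ℝ)
    (hWcont : ContinuousOn W (Ici 0))
    (hWmono : StrictMonoOn W (Ici 0))
    (hWpos : ∀ x ≥ (0:ℝ), 0 < W x)
    (hWneg : ∀ x < (0:ℝ), W x = 0)
    (hWdiff : ∀ x ∈ Ioi (0:ℝ), DifferentiableAt ℝ W x)
    (Z Zbar R : ℝ → ℝ) (f g vbar γ G H : ℝ → ℝ → ℝ)
    (hZ : ∀ x, Z x = 1 + q * ∫ y in (0:ℝ)..x, W y)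
    (hZbar : ∀ x, Zbar x = ∫ y in (0:ℝ)..x, Z y)
    (hR : ∀ x, R x = Zbar x - μ / q)
    (hf : ∀ c₁ c₂, f c₁ c₂ =
      -R (c₂ - c₁) + (c₂ - c₁ - β - μ / q) * Z (c₂ - c₁)
        - ((c₂ - c₁ - β - μ / q) * Z c₂ - R c₂) * (W (c₂ - c₁) / W c₂))
    (hg : ∀ c₁ c₂, g c₁ c₂ =
      1 - Z (c₂ - c₁) + Z c₂ * (W (c₂ - c₁) / W c₂))
    (hvbar : ∀ c₁ c₂, vbar c₁ c₂ = f c₁ c₂ / g c₁ c₂)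
    (hγ : ∀ c₁ c₂, γ c₁ c₂ = vbar c₁ c₂ + c₂ - c₁ - β - μ / q)
    (hG : ∀ c₁ c₂, G c₁ c₂ = γ c₁ c₂ * Z c₂ - R c₂)
    (hH : ∀ c₁ c₂, H c₁ c₂ =
      q * (γ c₁ c₂ * W (c₂ - c₁) - ∫ y in (0:ℝ)..(c₂ - c₁), W y))
    (c₁ c₂ : ℝ) (hc₁ : 0 < c₁) (hc : c₁ < c₂)
    (hgne : g c₁ c₂ ≠ 0) :
    HasDerivAt (fun a => vbar a c₂ - a)
      ((1 / g c₁ c₂) *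
        (-(H c₁ c₂) + G c₁ c₂ * (deriv W (c₂ - c₁) / W c₂))) c₁ := by
  have hx : (0:ℝ) < c₂ - c₁ := by linarith
  have hWcx : ContinuousOn W (Ioi 0) :=
    continuousOn_of_forall_continuousAt fun t ht => (hWdiff t ht).continuousAt
  have hWint : ∀ t : ℝ, 0 ≤ t → IntervalIntegrable W MeasureTheory.volume 0 t := by
    intro t ht
    exact (hWcont.mono (by rw [uIcc_of_le ht]; exact Icc_subset_Ici_self)).intervalIntegrable
  -- derivative of the primitive of W at c₂ - c₁
  have hprim : HasDerivAt (fun t => ∫ y in (0:ℝ)..t, W y) (W (c₂ - c₁)) (c₂ - c₁) :=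
    integral_hasDerivAt_right (hWint _ hx.le)
      (hWcx.stronglyMeasurableAtFilter isOpen_Ioi _ hx)
      (hWdiff _ hx).continuousAt
  have hZd : HasDerivAt Z (q * W (c₂ - c₁)) (c₂ - c₁) := by
    have hh : Z = fun t => 1 + q * ∫ y in (0:ℝ)..t, W y := funext hZ
    rw [hh]
    exact ((hprim.const_mul q).const_add 1)
  -- Z is continuous on Ioi 0
  have hZcont : ContinuousOn Z (Ioi 0) := by
    intro t ht
    have hprimt : HasDerivAt (fun s => ∫ y in (0:ℝ)..s, W y) (W t) t :=
      integral_hasDerivAt_right (hWint _ (le_of_lt ht))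
        (hWcx.stronglyMeasurableAtFilter isOpen_Ioi _ ht)
        (hWdiff _ ht).continuousAt
    have hct : ContinuousAt Z t := by
      have hh : Z = fun s => 1 + q * ∫ y in (0:ℝ)..s, W y := funext hZ
      rw [hh]
      exact ((hprimt.const_mul q).const_add 1).continuousAt
    exact hct.continuousWithinAt
  have hZIcc : ContinuousOn Z (Icc 0 (c₂ - c₁)) := by
    have hh : Z = fun t => 1 + q * ∫ y in (0:ℝ)..t, W y := funext hZ
    rw [hh]
    have hWI : MeasureTheory.IntegrableOn W (uIcc 0 (c₂ - c₁)) MeasureTheory.volume := by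
      rw [uIcc_of_le hx.le]
      exact (hWcont.mono Icc_subset_Ici_self).integrableOn_Icc
    have hcp := continuousOn_primitive_interval hWI
    rw [uIcc_of_le hx.le] at hcp
    exact (continuousOn_const.add (continuousOn_const.mul hcp))
  have hZint : IntervalIntegrable Z MeasureTheory.volume 0 (c₂ - c₁) := by
    apply ContinuousOn.intervalIntegrable
    rwa [uIcc_of_le hx.le]
  have hZbard : HasDerivAt Zbar (Z (c₂ - c₁)) (c₂ - c₁) := by
    have hh : Zbar = fun t => ∫ y in (0:ℝ)..t, Z y := funext hZbar
    rw [hh]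
    exact integral_hasDerivAt_right hZint
      (hZcont.stronglyMeasurableAtFilter isOpen_Ioi _ hx)
      (hZcont.continuousAt (IsOpen.mem_nhds isOpen_Ioi hx))
  have hRd : HasDerivAt R (Z (c₂ - c₁)) (c₂ - c₁) := by
    have hh : R = fun t => Zbar t - μ / q := funext hR
    rw [hh]
    exact hZbard.sub_const _
  have hWd : HasDerivAt W (deriv W (c₂ - c₁)) (c₂ - c₁) := (hWdiff _ hx).hasDerivAt
  -- inner function a ↦ c₂ - a
  have hL : HasDerivAt (fun a : ℝ => c₂ - a) (-1) c₁ := by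
    simpa using (hasDerivAt_id c₁).const_sub c₂
  have h1 : HasDerivAt (fun a => R (c₂ - a)) (Z (c₂ - c₁) * -1) c₁ := by
    exact hRd.comp c₁ hL
  have h2 : HasDerivAt (fun a => Z (c₂ - a)) (q * W (c₂ - c₁) * -1) c₁ := by
    exact hZd.comp c₁ hL
  have h3 : HasDerivAt (fun a => W (c₂ - a)) (deriv W (c₂ - c₁) * -1) c₁ := by
    exact hWd.comp c₁ hL
  have h4 : HasDerivAt (fun a => c₂ - a - β - μ / q) (-1) c₁ :=
    (hL.sub_const β).sub_const (μ / q)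
  have hW₂ : W c₂ ≠ 0 := ne_of_gt (hWpos c₂ (by linarith))
  -- derivative of numerator and denominator
  have hF : HasDerivAt
      (fun a => -R (c₂ - a) + (c₂ - a - β - μ / q) * Z (c₂ - a)
        - ((c₂ - a - β - μ / q) * Z c₂ - R c₂) * (W (c₂ - a) / W c₂))
      (-(Z (c₂ - c₁) * -1) + ((-1) * Z (c₂ - c₁)
          + (c₂ - c₁ - β - μ / q) * (q * W (c₂ - c₁) * -1))
        - (((-1) * Z c₂) * (W (c₂ - c₁) / W c₂)
          + ((c₂ - c₁ - β - μ / q) * Z c₂ - R c₂) * (deriv W (c₂ - c₁) * -1 / W c₂))) c₁ := by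
    exact (h1.neg.add (h4.mul h2)).sub
      (((h4.mul_const (Z c₂)).sub_const (R c₂)).mul (h3.div_const (W c₂)))
  have hGd : HasDerivAt
      (fun a => 1 - Z (c₂ - a) + Z c₂ * (W (c₂ - a) / W c₂))
      (-(q * W (c₂ - c₁) * -1) + Z c₂ * (deriv W (c₂ - c₁) * -1 / W c₂)) c₁ := by
    exact (h2.const_sub 1).add ((h3.div_const (W c₂)).const_mul (Z c₂))
  have hgv : g c₁ c₂ = 1 - Z (c₂ - c₁) + Z c₂ * (W (c₂ - c₁) / W c₂) := hg c₁ c₂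
  have hgne' : 1 - Z (c₂ - c₁) + Z c₂ * (W (c₂ - c₁) / W c₂) ≠ 0 := hgv ▸ hgne
  have hveq : (fun a => vbar a c₂ - a)
      = fun a => (-R (c₂ - a) + (c₂ - a - β - μ / q) * Z (c₂ - a)
        - ((c₂ - a - β - μ / q) * Z c₂ - R c₂) * (W (c₂ - a) / W c₂))
        / (1 - Z (c₂ - a) + Z c₂ * (W (c₂ - a) / W c₂)) - a := by
    funext a
    rw [hvbar, hf, hg]
  rw [hveq]
  have hdiv := (hF.div hGd hgne').sub (hasDerivAt_id c₁)
  refine hdiv.congr_deriv ?_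
  symm
  have hZx : Z (c₂ - c₁) = 1 + q * ∫ y in (0:ℝ)..(c₂ - c₁), W y := hZ _
  have hWbar : (∫ y in (0:ℝ)..(c₂ - c₁), W y) = (Z (c₂ - c₁) - 1) / q := by
    rw [hZx]; field_simp; ring
  rw [hH, hG, hγ, hvbar, hf, hg, hWbar]
  have hq' : q ≠ 0 := ne_of_gt hq
  have heq : (1 : ℝ) - Z (c₂ - c₁) + Z c₂ * (W (c₂ - c₁) / W c₂)
      = (W c₂ - Z (c₂ - c₁) * W c₂ + Z c₂ * W (c₂ - c₁)) / W c₂ := by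
    field_simp [hW₂]
  have hD : W c₂ - Z (c₂ - c₁) * W c₂ + Z c₂ * W (c₂ - c₁) ≠ 0 := by
    intro h0
    exact hgne' (by rw [heq, h0, zero_div])
  rw [heq]
  generalize hDd : W c₂ - Z (c₂ - c₁) * W c₂ + Z c₂ * W (c₂ - c₁) = D at hD ⊢
  field_simp [hD, hW₂, hq']
  subst hDd
  ring
end

section
/- Let $v:[0,\infty)\to\mathbb{R}$ be continuous, differentiable on $(0,\infty)\setminus\{c_2^*\}$ with $v'(x)=1$ for $x>c_2^*$, and suppose $v'(x)<1$ on $(c_1^*,c_2^*)$ and $v'(x)\ge 1$ on $(0,c_1^*)$, for some $0\le c_1^*<c_2^*$. If additionally $v(c_2^*)-v(c_1^*) = c_2^*-c_1^*-\beta$ for some $\beta>0$, then for all $x>y\ge 0$: $v(x)-v(y) \ge x-y-\beta$. -/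
open Set

theorem stmt_8 (v : ℝ → ℝ) (c₁ c₂ β : ℝ) (hβ : 0 < β)
    (hc₁ : 0 ≤ c₁) (hc : c₁ < c₂)
    (hcont : ContinuousOn v (Ici 0))
    (hdiff : ∀ x ∈ Ioi (0:ℝ), x ≠ c₂ → DifferentiableAt ℝ v x)
    (hd_above : ∀ x, c₂ < x → deriv v x = 1)
    (hd_mid : ∀ x ∈ Ioo c₁ c₂, deriv v x < 1)
    (hd_below : ∀ x ∈ Ioo (0:ℝ) c₁, 1 ≤ deriv v x)
    (hfit : v c₂ - v c₁ = c₂ - c₁ - β) :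
    ∀ x y, 0 ≤ y → y < x → v x - v y ≥ x - y - β := by
  set g : ℝ → ℝ := fun t => v t - t with hg
  have hgcont : ContinuousOn g (Ici 0) := hcont.sub continuousOn_id
  have hgderiv : ∀ t, 0 < t → t ≠ c₂ → HasDerivAt g (deriv v t - 1) t := by
    intro t ht htne
    exact ((hdiff t ht htne).hasDerivAt).sub (hasDerivAt_id t)
  -- monotone on [0, c₁]
  have hmono : MonotoneOn g (Icc 0 c₁) := by
    apply monotoneOn_of_deriv_nonneg (convex_Icc 0 c₁)
      (hgcont.mono (Icc_subset_Ici_self))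
    · intro t ht
      rw [interior_Icc] at ht
      exact ((hgderiv t ht.1 (ne_of_lt (ht.2.trans hc))).differentiableAt).differentiableWithinAt
    · intro t ht
      rw [interior_Icc] at ht
      rw [(hgderiv t ht.1 (ne_of_lt (ht.2.trans hc))).deriv]
      linarith [hd_below t ht]
  -- antitone on [c₁, c₂]
  have hanti : AntitoneOn g (Icc c₁ c₂) := by
    apply antitoneOn_of_deriv_nonpos (convex_Icc c₁ c₂)
      (hgcont.mono (fun t ht => hc₁.trans ht.1))
    · intro t ht
      rw [interior_Icc] at ht
      exact ((hgderiv t (lt_of_le_of_lt hc₁ ht.1) (ne_of_lt ht.2)).differentiableAt).differentiableWithinAt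
    · intro t ht
      rw [interior_Icc] at ht
      rw [(hgderiv t (lt_of_le_of_lt hc₁ ht.1) (ne_of_lt ht.2)).deriv]
      linarith [hd_mid t ht]
  -- constant on [c₂, ∞)
  have hconst : ∀ b, c₂ ≤ b → g b = g c₂ := by
    intro b hb
    have h0 : (0:ℝ) ≤ c₂ := le_of_lt (lt_of_le_of_lt hc₁ hc)
    have hsub : Icc c₂ b ⊆ Ici 0 := fun t ht => h0.trans ht.1
    have hdif : ∀ t ∈ interior (Icc c₂ b), DifferentiableWithinAt ℝ g (interior (Icc c₂ b)) t := by
      intro t ht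
      rw [interior_Icc] at ht
      exact ((hgderiv t (lt_of_le_of_lt h0 ht.1) (ne_of_gt ht.1)).differentiableAt).differentiableWithinAt
    have hzero : ∀ t ∈ interior (Icc c₂ b), deriv g t = 0 := by
      intro t ht
      rw [interior_Icc] at ht
      rw [(hgderiv t (lt_of_le_of_lt h0 ht.1) (ne_of_gt ht.1)).deriv, hd_above t ht.1]
      ring
    have hm : MonotoneOn g (Icc c₂ b) :=
      monotoneOn_of_deriv_nonneg (convex_Icc c₂ b) (hgcont.mono hsub) hdif
        (fun t ht => (hzero t ht).ge)
    have ha : AntitoneOn g (Icc c₂ b) :=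
      antitoneOn_of_deriv_nonpos (convex_Icc c₂ b) (hgcont.mono hsub) hdif
        (fun t ht => (hzero t ht).le)
    have h1 : g c₂ ≤ g b := hm (left_mem_Icc.mpr hb) (right_mem_Icc.mpr hb) hb
    have h2 : g b ≤ g c₂ := ha (left_mem_Icc.mpr hb) (right_mem_Icc.mpr hb) hb
    linarith
  intro x y hy hyx
  have hx : 0 ≤ x := le_of_lt (lt_of_le_of_lt hy hyx)
  -- upper bound g y ≤ g c₁
  have hgy : g y ≤ g c₁ := by
    rcases le_or_gt y c₁ with h | h
    · exact hmono ⟨hy, h⟩ ⟨hc₁, le_refl c₁⟩ h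
    · rcases le_or_gt y c₂ with h2 | h2
      · exact hanti ⟨le_refl c₁, le_of_lt hc⟩ ⟨le_of_lt h, h2⟩ (le_of_lt h)
      · rw [hconst y (le_of_lt h2)]
        exact hanti ⟨le_refl c₁, le_of_lt hc⟩ ⟨le_of_lt hc, le_refl c₂⟩ (le_of_lt hc)
  have hfit' : g c₂ = g c₁ - β := by simp only [hg]; linarith
  rcases le_or_gt x c₁ with hxle | hxgt
  · -- both in [0, c₁]
    have := hmono ⟨hy, le_of_lt (hyx.trans_le hxle)⟩ ⟨hx, hxle⟩ (le_of_lt hyx)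
    simp only [hg] at this
    linarith
  · have hgx : g c₂ ≤ g x := by
      rcases le_or_gt x c₂ with h2 | h2
      · exact hanti ⟨le_of_lt hxgt, h2⟩ ⟨le_of_lt hc, le_refl c₂⟩ h2
      · exact (hconst x (le_of_lt h2)).ge
    have : g x - g y ≥ -β := by linarith
    simp only [hg] at this
    linarith
end

section
/- Let $q>0$, $\gamma>0$, $c_1^*\ge0$, $c_2^*>c_1^*$, and let $W:[0,\infty)\to[0,\infty)$ be continuous with $W(0)>0$ (bounded variation case). Define $v(x) = -R(c_2^*-x)+\gamma Z(c_2^*-x)$ for $x\ge0$, with $Z(y)=1+q\int_0^{y\vee 0}W$, $\overline Z(y)=\int_0^y Z$ for $y\ge0$ and $\overline Z(y)=y$ for $y<0$, $R(y)=\overline Z(y)-\mu/q$. Then $v$ is continuous at $c_2^*$, $v'(c_2^*+)=1$, and $v'(c_2^*-)=1-\gamma q W(0) < 1$; i.e., smooth fit fails at $c_2^*$. -/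
open Set intervalIntegral

theorem stmt_9 (q μ γ : ℝ) (hq : 0 < q) (hγ : 0 < γ)
    (c₁ c₂ : ℝ) (hc₁ : 0 ≤ c₁) (hc : c₁ < c₂)
    (W : ℝ → ℝ)
    (hWcont : ContinuousOn W (Ici 0))
    (hWnonneg : ∀ x ≥ (0:ℝ), 0 ≤ W x)
    (hW0 : 0 < W 0)
    (Z Zbar R v : ℝ → ℝ)
    (hZ : ∀ y, Z y = 1 + q * ∫ t in (0:ℝ)..(max y 0), W t)
    (hZbar : ∀ y, Zbar y = if y < 0 then y else ∫ t in (0:ℝ)..y, Z t)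
    (hR : ∀ y, R y = Zbar y - μ / q)
    (hv : ∀ x, v x = -R (c₂ - x) + γ * Z (c₂ - x)) :
    ContinuousAt v c₂ ∧
    HasDerivWithinAt v 1 (Ici c₂) c₂ ∧
    HasDerivWithinAt v (1 - γ * q * W 0) (Iic c₂) c₂ ∧
    1 - γ * q * W 0 < 1 := by
  have hZ0 : Z 0 = 1 := by simp [hZ]
  -- v on the right of c₂
  have hvr : ∀ x ∈ Ici c₂, v x = x - c₂ + (μ / q + γ) := by
    intro x hx
    have hy : c₂ - x ≤ 0 := by simp at hx; linarith
    have hmax : max (c₂ - x) 0 = 0 := max_eq_right hy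
    have hZy : Z (c₂ - x) = 1 := by rw [hZ, hmax]; simp
    have hZby : Zbar (c₂ - x) = c₂ - x := by
      rw [hZbar]
      rcases lt_or_eq_of_le hy with h | h
      · simp [h]
      · simp [h, not_lt.2 (le_of_eq h.symm)]
    rw [hv, hR, hZby, hZy]; ring
  have hder_r : HasDerivWithinAt v 1 (Ici c₂) c₂ := by
    have h : HasDerivWithinAt (fun x : ℝ => x - c₂ + (μ / q + γ)) 1 (Ici c₂) c₂ := by
      simpa using ((hasDerivWithinAt_id c₂ (Ici c₂)).sub_const c₂).add_const (μ / q + γ)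
    exact h.congr hvr (hvr c₂ self_mem_Ici)
  -- measurability / integrability preliminaries
  have hWint : IntervalIntegrable W MeasureTheory.volume 0 1 := by
    refine (hWcont.mono ?_).intervalIntegrable
    rw [uIcc_of_le zero_le_one]
    exact Icc_subset_Ici_self
  have hIWcont : ContinuousOn (fun y => ∫ t in (0:ℝ)..y, W t) (Icc 0 1) := by
    have h := continuousOn_primitive_interval (a := (0:ℝ)) (b := (1:ℝ)) (f := W)
      (μ := MeasureTheory.volume)
      (by rw [uIcc_of_le zero_le_one]
          exact (hWcont.mono Icc_subset_Ici_self).integrableOn_Icc)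
    rwa [uIcc_of_le zero_le_one] at h
  have hZcont : ContinuousOn Z (Icc 0 1) := by
    have h : ContinuousOn (fun y => 1 + q * ∫ t in (0:ℝ)..y, W t) (Icc 0 1) :=
      continuousOn_const.add (continuousOn_const.mul hIWcont)
    exact h.congr fun y hy => by rw [hZ, max_eq_left hy.1]
  have hIcc_mem : Icc (0:ℝ) 1 ∈ nhdsWithin (0:ℝ) (Ici 0) := by
    refine mem_nhdsWithin.2 ⟨Iio 1, isOpen_Iio, by norm_num, ?_⟩
    rintro x ⟨h1, h2⟩
    exact ⟨h2, le_of_lt h1⟩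
  have hIcc_mem' : Icc (0:ℝ) 1 ∈ nhdsWithin (0:ℝ) (Ioi 0) :=
    nhdsWithin_mono 0 Ioi_subset_Ici_self hIcc_mem
  have hZmeas : StronglyMeasurableAtFilter Z (nhdsWithin (0:ℝ) (Ioi 0)) MeasureTheory.volume :=
    ⟨Icc 0 1, hIcc_mem', hZcont.aestronglyMeasurable measurableSet_Icc⟩
  have hZcw : ContinuousWithinAt Z (Ioi 0) 0 :=
    ((hZcont.continuousWithinAt ⟨le_refl 0, zero_le_one⟩).mono_of_mem_nhdsWithin hIcc_mem).mono
      Ioi_subset_Ici_self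
  -- one-sided FTC derivatives at 0
  have hG : HasDerivWithinAt (fun y => ∫ t in (0:ℝ)..y, Z t) 1 (Ici 0) 0 := by
    have h := integral_hasDerivWithinAt_right (f := Z) (a := (0:ℝ)) (b := (0:ℝ))
      (s := Ici 0) (t := Ioi 0) IntervalIntegrable.refl hZmeas hZcw
    rwa [hZ0] at h
  have hIW : HasDerivWithinAt (fun y => ∫ t in (0:ℝ)..y, W t) (W 0) (Ici 0) 0 :=
    integral_hasDerivWithinAt_right (f := W) (a := (0:ℝ)) (b := (0:ℝ))
      (s := Ici 0) (t := Ioi 0) IntervalIntegrable.refl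
      ⟨Ici 0, nhdsWithin_mono 0 Ioi_subset_Ici_self self_mem_nhdsWithin,
        hWcont.aestronglyMeasurable measurableSet_Ici⟩
      ((hWcont.continuousWithinAt self_mem_Ici).mono Ioi_subset_Ici_self)
  -- composition with x ↦ c₂ - x
  have hcomp : HasDerivWithinAt (fun x : ℝ => c₂ - x) (-1) (Iic c₂) c₂ := by
    simpa using (hasDerivWithinAt_id c₂ (Iic c₂)).const_sub c₂
  have hmaps : MapsTo (fun x : ℝ => c₂ - x) (Iic c₂) (Ici 0) := by
    intro x hx; simp at hx ⊢; linarith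
  have h0 : c₂ - c₂ = 0 := sub_self c₂
  have hGc : HasDerivWithinAt (fun x => ∫ t in (0:ℝ)..(c₂ - x), Z t) (1 * -1) (Iic c₂) c₂ := by
    have h := HasDerivWithinAt.comp c₂ (show HasDerivWithinAt (fun y => ∫ t in (0:ℝ)..y, Z t) 1 (Ici 0) (c₂ - c₂) by rw [h0]; exact hG) hcomp hmaps
    exact h
  have hIWc : HasDerivWithinAt (fun x => ∫ t in (0:ℝ)..(c₂ - x), W t) (W 0 * -1) (Iic c₂) c₂ := by
    have h := HasDerivWithinAt.comp c₂ (show HasDerivWithinAt (fun y => ∫ t in (0:ℝ)..y, W t) (W 0) (Ici 0) (c₂ - c₂) by rw [h0]; exact hIW) hcomp hmaps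
    exact h
  -- v on the left of c₂
  have hvl : ∀ x ∈ Iic c₂, v x =
      -((∫ t in (0:ℝ)..(c₂ - x), Z t) - μ / q) + γ * (1 + q * ∫ t in (0:ℝ)..(c₂ - x), W t) := by
    intro x hx
    have hy : (0:ℝ) ≤ c₂ - x := by simp at hx; linarith
    rw [hv, hR, hZbar, hZ, max_eq_left hy, if_neg (not_lt.2 hy)]
  have hder_l : HasDerivWithinAt v (1 - γ * q * W 0) (Iic c₂) c₂ := by
    have h1 : HasDerivWithinAt
        (fun x => -((∫ t in (0:ℝ)..(c₂ - x), Z t) - μ / q)) (-(1 * -1)) (Iic c₂) c₂ :=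
      (hGc.sub_const (μ / q)).neg
    have h2 : HasDerivWithinAt
        (fun x => γ * (1 + q * ∫ t in (0:ℝ)..(c₂ - x), W t)) (γ * (q * (W 0 * -1))) (Iic c₂) c₂ :=
      ((hIWc.const_mul q).const_add 1).const_mul γ
    have h := (h1.add h2).congr hvl (hvl c₂ self_mem_Iic)
    have : -(1 * -1) + γ * (q * (W 0 * -1)) = 1 - γ * q * W 0 := by ring
    rwa [this] at h
  refine ⟨?_, hder_r, hder_l, ?_⟩
  · have h := hder_l.continuousWithinAt.union hder_r.continuousWithinAt
    rwa [Iic_union_Ici, continuousWithinAt_univ] at h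
  · have : 0 < γ * q * W 0 := by positivity
    linarith
end

section
/- With the same setup but $W(0)=0$ (unbounded variation case) and $W$ differentiable on $(0,\infty)$ with $W'(0+)\in(0,\infty]$: the function $v(x)=-R(c_2^*-x)+\gamma Z(c_2^*-x)$ is differentiable at $c_2^*$ with $v'(c_2^*)=1$, and if $W'(0+)<\infty$ then $v''(c_2^*-)=\gamma q W'(0+)>0$ while $v''(c_2^*+)=0$. -/
open Set Filter intervalIntegral

theorem stmt_10 (q μ γ : ℝ) (hq : 0 < q) (hγ : 0 < γ)
    (c₁ c₂ : ℝ) (hc₁ : 0 ≤ c₁) (hc : c₁ < c₂)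
    (W : ℝ → ℝ)
    (hWcont : ContinuousOn W (Ici 0))
    (hWnonneg : ∀ x ≥ (0:ℝ), 0 ≤ W x)
    (hW0 : W 0 = 0)
    (hWdiff : ∀ x ∈ Ioi (0:ℝ), DifferentiableAt ℝ W x)
    (w' : ℝ) (hw'pos : 0 < w')
    (hw' : Tendsto (deriv W) (nhdsWithin 0 (Ioi 0)) (nhds w'))
    (Z Zbar R v : ℝ → ℝ)
    (hZ : ∀ y, Z y = 1 + q * ∫ t in (0:ℝ)..(max y 0), W t)
    (hZbar : ∀ y, Zbar y = if y < 0 then y else ∫ t in (0:ℝ)..y, Z t)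
    (hR : ∀ y, R y = Zbar y - μ / q)
    (hv : ∀ x, v x = -R (c₂ - x) + γ * Z (c₂ - x)) :
    HasDerivAt v 1 c₂ ∧
    Tendsto (deriv (deriv v)) (nhdsWithin c₂ (Iio c₂)) (nhds (γ * q * w')) ∧
    0 < γ * q * w' ∧
    ∀ x, c₂ < x → deriv (deriv v) x = 0 := by
  -- extended W
  set Wt : ℝ → ℝ := fun t => W (max t 0) with hWt
  have hmax : Continuous fun t : ℝ => max t 0 := continuous_id.max continuous_const
  have hWtcont : Continuous Wt :=
    hWcont.comp_continuous hmax fun x => mem_Ici.2 (le_max_right x 0)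
  have hWteq : ∀ t ≥ (0:ℝ), Wt t = W t := by
    intro t ht; simp [hWt, max_eq_left ht]
  have hWtzero : ∀ t ≤ (0:ℝ), Wt t = 0 := by
    intro t ht; simp [hWt, max_eq_right ht, hW0]
  -- antiderivatives
  set F : ℝ → ℝ := fun y => ∫ t in (0:ℝ)..y, Wt t with hF
  have hFd : ∀ y, HasDerivAt F (Wt y) y := fun y =>
    intervalIntegral.integral_hasDerivAt_right (hWtcont.intervalIntegrable _ _)
      hWtcont.aestronglyMeasurable.stronglyMeasurableAtFilter hWtcont.continuousAt
  have hFcont : Continuous F := by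
    apply continuous_iff_continuousAt.2
    exact fun y => (hFd y).continuousAt
  have hFzero : ∀ y ≤ (0:ℝ), F y = 0 := by
    intro y hy
    have : ∀ t ∈ uIcc (0:ℝ) y, Wt t = (fun _ => (0:ℝ)) t := by
      intro t ht
      rcases ht with ⟨h1, h2⟩
      apply hWtzero
      calc t ≤ max 0 y := h2
      _ ≤ 0 := by simp [hy]
    simp only [hF]
    rw [intervalIntegral.integral_congr this]
    simp
  set H : ℝ → ℝ := fun y => ∫ t in (0:ℝ)..y, F t with hH
  have hHd : ∀ y, HasDerivAt H (F y) y := fun y =>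
    intervalIntegral.integral_hasDerivAt_right (hFcont.intervalIntegrable _ _)
      hFcont.aestronglyMeasurable.stronglyMeasurableAtFilter hFcont.continuousAt
  have hHzero : ∀ y ≤ (0:ℝ), H y = 0 := by
    intro y hy
    have : ∀ t ∈ uIcc (0:ℝ) y, F t = (fun _ => (0:ℝ)) t := by
      intro t ht
      rcases ht with ⟨h1, h2⟩
      apply hFzero
      calc t ≤ max 0 y := h2
      _ ≤ 0 := by simp [hy]
    simp only [hH]
    rw [intervalIntegral.integral_congr this]
    simp
  -- Z and Zbar in terms of F, H
  have hZF : ∀ y, Z y = 1 + q * F y := by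
    intro y
    rw [hZ y]
    rcases le_or_gt 0 y with hy | hy
    · rw [max_eq_left hy]
      congr 2
      apply intervalIntegral.integral_congr
      intro t ht
      rcases ht with ⟨h1, h2⟩
      have ht0 : 0 ≤ t := by
        calc (0:ℝ) = min 0 y := (min_eq_left hy).symm
        _ ≤ t := h1
      exact (hWteq t ht0).symm
    · rw [max_eq_right hy.le, hFzero y hy.le]
      simp
  have hZbarH : ∀ y, Zbar y = y + q * H y := by
    intro y
    rw [hZbar y]
    rcases lt_or_ge y 0 with hy | hy
    · rw [if_pos hy, hHzero y hy.le]; ring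
    · rw [if_neg (not_lt.2 hy)]
      have : ∀ t ∈ uIcc (0:ℝ) y, Z t = (fun t => 1 + q * F t) t := fun t _ => hZF t
      rw [intervalIntegral.integral_congr this]
      have h1 : IntervalIntegrable (fun _ : ℝ => (1:ℝ)) MeasureTheory.volume 0 y :=
        intervalIntegrable_const
      have h2 : IntervalIntegrable (fun t => q * F t) MeasureTheory.volume 0 y :=
        (hFcont.const_smul q).intervalIntegrable _ _
      rw [intervalIntegral.integral_add h1 h2, intervalIntegral.integral_const,
        intervalIntegral.integral_const_mul]
      simp [hH]
  -- v in closed form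
  have hvF : v = fun x => x - c₂ + μ / q + γ + γ * q * F (c₂ - x) - q * H (c₂ - x) := by
    funext x
    rw [hv x, hR, hZbarH, hZF]
    ring
  -- derivative of v
  set g : ℝ → ℝ := fun x => 1 - γ * q * Wt (c₂ - x) + q * F (c₂ - x) with hg
  have hvd : ∀ x, HasDerivAt v (g x) x := by
    intro x
    rw [hvF]
    have hin : HasDerivAt (fun x : ℝ => c₂ - x) (-1) x := by
      exact (hasDerivAt_id' x).const_sub c₂
    have hFc : HasDerivAt (fun x => F (c₂ - x)) (Wt (c₂ - x) * (-1)) x :=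
      (hFd (c₂ - x)).comp x hin
    have hHc : HasDerivAt (fun x => H (c₂ - x)) (F (c₂ - x) * (-1)) x :=
      (hHd (c₂ - x)).comp x hin
    have := ((((hasDerivAt_id x).sub_const c₂).add_const (μ / q)).add_const γ).add
      (hFc.const_mul (γ * q)) |>.sub (hHc.const_mul q)
    refine this.congr_deriv ?_
    simp [hg]; ring
  have hderiv : deriv v = g := funext fun x => (hvd x).deriv
  have hWt0 : Wt (c₂ - c₂) = 0 := by rw [sub_self]; exact hWtzero 0 le_rfl
  have hF0 : F (c₂ - c₂) = 0 := by rw [sub_self]; exact hFzero 0 le_rfl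
  refine ⟨?_, ?_, by positivity, ?_⟩
  · have := hvd c₂
    simp only [hg] at this
    rwa [hWt0, hF0, mul_zero, mul_zero, sub_zero, add_zero] at this
  · -- second derivative from the left
    have hform : ∀ x < c₂, deriv (deriv v) x = γ * q * deriv W (c₂ - x) - q * W (c₂ - x) := by
      intro x hx
      have hy : (0:ℝ) < c₂ - x := by linarith
      have hWd : HasDerivAt W (deriv W (c₂ - x)) (c₂ - x) :=
        (hWdiff _ hy).hasDerivAt
      have hWtd : HasDerivAt Wt (deriv W (c₂ - x)) (c₂ - x) := by
        apply hWd.congr_of_eventuallyEq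
        filter_upwards [Ioi_mem_nhds hy] with t ht
        exact hWteq t (le_of_lt ht)
      have hin : HasDerivAt (fun x : ℝ => c₂ - x) (-1) x := by
        exact (hasDerivAt_id' x).const_sub c₂
      have hgd : HasDerivAt g (γ * q * deriv W (c₂ - x) - q * W (c₂ - x)) x := by
        have h1 : HasDerivAt (fun x => Wt (c₂ - x)) (deriv W (c₂ - x) * (-1)) x :=
          hWtd.comp x hin
        have h2 : HasDerivAt (fun x => F (c₂ - x)) (Wt (c₂ - x) * (-1)) x :=
          (hFd (c₂ - x)).comp x hin
        have := ((hasDerivAt_const x (1:ℝ)).sub (h1.const_mul (γ * q))).add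
          (h2.const_mul q)
        refine this.congr_deriv ?_
        rw [hWteq _ hy.le]; ring
      rw [hderiv, hgd.deriv]
    have h1 : Tendsto (fun x => c₂ - x) (nhdsWithin c₂ (Iio c₂)) (nhdsWithin 0 (Ioi 0)) := by
      rw [tendsto_nhdsWithin_iff]
      constructor
      · have : Tendsto (fun x => c₂ - x) (nhds c₂) (nhds (c₂ - c₂)) :=
          (tendsto_const_nhds.sub tendsto_id)
        rw [sub_self] at this
        exact this.mono_left nhdsWithin_le_nhds
      · filter_upwards [self_mem_nhdsWithin] with x hx
        simp only [mem_Iio] at hx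
        exact mem_Ioi.2 (by linarith)
    have h2 : Tendsto (fun x => deriv W (c₂ - x)) (nhdsWithin c₂ (Iio c₂)) (nhds w') :=
      hw'.comp h1
    have h3 : Tendsto (fun x => W (c₂ - x)) (nhdsWithin c₂ (Iio c₂)) (nhds 0) := by
      have hWc : Tendsto W (nhdsWithin 0 (Ioi 0)) (nhds 0) := by
        have := (hWcont 0 Set.self_mem_Ici).tendsto
        rw [hW0] at this
        exact this.mono_left (nhdsWithin_mono 0 Ioi_subset_Ici_self)
      exact hWc.comp h1
    have := ((h2.const_mul (γ * q)).sub (h3.const_mul q))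
    rw [mul_zero, sub_zero] at this
    apply this.congr'
    filter_upwards [self_mem_nhdsWithin] with x hx
    exact (hform x hx).symm
  · intro x hx
    have : g =ᶠ[nhds x] fun _ => (1:ℝ) := by
      filter_upwards [Ioi_mem_nhds hx] with t ht
      have h1 : c₂ - t ≤ 0 := by simp only [mem_Ioi] at ht; linarith
      simp [hg, hWtzero _ h1, hFzero _ h1]
    rw [hderiv]
    have hgd : HasDerivAt g 0 x :=
      (hasDerivAt_const x (1:ℝ)).congr_of_eventuallyEq this
    exact hgd.deriv
end

section
/- Let $q>0$ and let $W,Z,\overline Z, R, \gamma, G, g$ be as in the dual-model dividend problem (built from a continuous strictly increasing $W>0$ on $[0,\infty)$), with fixed transaction cost $\beta>0$. Fix $c_1\ge0$ and suppose $W(0)>0$ (bounded variation). Then $\lim_{c_2\downarrow c_1} G(c_1,c_2) = -\beta\, W(c_1)/W(0) < 0$ when $c_1 > 0$; in particular $G(c_1,c_2)<0$ for $c_2$ sufficiently close to $c_1$. -/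
open Set Filter intervalIntegral

theorem stmt_13 (q μ β : ℝ) (hq : 0 < q) (hβ : 0 < β) (W : ℝ → ℝ)
    (hWcont : ContinuousOn W (Ici 0))
    (hWmono : StrictMonoOn W (Ici 0))
    (hWpos : ∀ x ≥ (0:ℝ), 0 < W x)
    (hWneg : ∀ x < (0:ℝ), W x = 0)
    (hW0 : 0 < W 0)
    (Z Zbar R : ℝ → ℝ) (f g vbar γ G : ℝ → ℝ → ℝ)
    (hZ : ∀ x, Z x = 1 + q * ∫ y in (0:ℝ)..x, W y)
    (hZbar : ∀ x, Zbar x = ∫ y in (0:ℝ)..x, Z y)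
    (hR : ∀ x, R x = Zbar x - μ / q)
    (hf : ∀ c₁ c₂, f c₁ c₂ =
      -R (c₂ - c₁) + (c₂ - c₁ - β - μ / q) * Z (c₂ - c₁)
        - ((c₂ - c₁ - β - μ / q) * Z c₂ - R c₂) * (W (c₂ - c₁) / W c₂))
    (hg : ∀ c₁ c₂, g c₁ c₂ =
      1 - Z (c₂ - c₁) + Z c₂ * (W (c₂ - c₁) / W c₂))
    (hvbar : ∀ c₁ c₂, vbar c₁ c₂ = f c₁ c₂ / g c₁ c₂)
    (hγ : ∀ c₁ c₂, γ c₁ c₂ = vbar c₁ c₂ + c₂ - c₁ - β - μ / q)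
    (hG : ∀ c₁ c₂, G c₁ c₂ = γ c₁ c₂ * Z c₂ - R c₂)
    (c₁ : ℝ) (hc₁ : 0 < c₁) :
    Tendsto (fun c₂ => G c₁ c₂) (nhdsWithin c₁ (Ioi c₁))
        (nhds (-β * W c₁ / W 0)) ∧
    -β * W c₁ / W 0 < 0 ∧
    ∀ᶠ c₂ in nhdsWithin c₁ (Ioi c₁), G c₁ c₂ < 0 := by
  set l := nhdsWithin c₁ (Ioi c₁) with hl
  -- W is monotone on ℝ
  have hWmono' : Monotone W := by
    intro x y hxy
    rcases lt_or_ge x 0 with hx | hx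
    · rw [hWneg x hx]
      rcases lt_or_ge y 0 with hy | hy
      · rw [hWneg y hy]
      · exact (hWpos y hy).le
    · exact hWmono.monotoneOn hx (hx.trans hxy) hxy
  have hWnonneg : ∀ x, 0 ≤ W x := by
    intro x
    rcases lt_or_ge x 0 with hx | hx
    · rw [hWneg x hx]
    · exact (hWpos x hx).le
  have hWint : ∀ a b : ℝ, IntervalIntegrable W MeasureTheory.volume a b :=
    fun a b => hWmono'.intervalIntegrable
  -- primitive of W is continuous, hence Z is continuous
  have hZcont : Continuous Z := by
    have h := intervalIntegral.continuous_primitive hWint 0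
    rw [show Z = fun x => 1 + q * ∫ y in (0:ℝ)..x, W y from funext hZ]
    continuity
  have hZint : ∀ a b : ℝ, IntervalIntegrable Z MeasureTheory.volume a b :=
    fun a b => hZcont.intervalIntegrable a b
  have hZbarcont : Continuous Zbar := by
    have h := intervalIntegral.continuous_primitive hZint 0
    rw [show Zbar = fun x => ∫ y in (0:ℝ)..x, Z y from funext hZbar]
    exact h
  have hRcont : Continuous R := by
    rw [show R = fun x => Zbar x - μ / q from funext hR]
    exact hZbarcont.sub continuous_const
  -- basic values
  have hZ0 : Z 0 = 1 := by simp [hZ]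
  have hZbar0 : Zbar 0 = 0 := by simp [hZbar]
  have hR0 : R 0 = -(μ / q) := by simp [hR, hZbar0]
  have hZc₁pos : 0 < Z c₁ := by
    rw [hZ]
    have : 0 ≤ ∫ y in (0:ℝ)..c₁, W y :=
      intervalIntegral.integral_nonneg hc₁.le (fun y _ => hWnonneg y)
    nlinarith
  have hWc₁pos : 0 < W c₁ := hWpos c₁ hc₁.le
  -- limits of the building blocks
  have hsub : Tendsto (fun c₂ : ℝ => c₂ - c₁) l (nhds 0) := by
    have : Tendsto (fun c₂ : ℝ => c₂ - c₁) (nhds c₁) (nhds (c₁ - c₁)) :=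
      (continuous_id.sub continuous_const).tendsto c₁
    simpa using this.mono_left nhdsWithin_le_nhds
  have hsub' : Tendsto (fun c₂ : ℝ => c₂ - c₁) l (nhdsWithin 0 (Ici 0)) := by
    apply tendsto_nhdsWithin_of_tendsto_nhds_of_eventually_within _ hsub
    filter_upwards [self_mem_nhdsWithin] with x hx
    exact (sub_pos.2 (mem_Ioi.1 hx)).le
  have hid : Tendsto (fun c₂ : ℝ => c₂) l (nhds c₁) :=
    tendsto_id.mono_left nhdsWithin_le_nhds
  have hWε : Tendsto (fun c₂ : ℝ => W (c₂ - c₁)) l (nhds (W 0)) :=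
    ((hWcont 0 self_mem_Ici).tendsto).comp hsub'
  have hWc : Tendsto (fun c₂ : ℝ => W c₂) l (nhds (W c₁)) := by
    have : ContinuousAt W c₁ :=
      hWcont.continuousAt (Ici_mem_nhds hc₁)
    exact this.tendsto.comp hid
  have hZε : Tendsto (fun c₂ : ℝ => Z (c₂ - c₁)) l (nhds 1) := by
    have := (hZcont.tendsto 0).comp hsub
    rwa [hZ0] at this
  have hZc : Tendsto (fun c₂ : ℝ => Z c₂) l (nhds (Z c₁)) :=
    (hZcont.tendsto c₁).comp hid
  have hRε : Tendsto (fun c₂ : ℝ => R (c₂ - c₁)) l (nhds (-(μ / q))) := by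
    have := (hRcont.tendsto 0).comp hsub
    rwa [hR0] at this
  have hRc : Tendsto (fun c₂ : ℝ => R c₂) l (nhds (R c₁)) :=
    (hRcont.tendsto c₁).comp hid
  -- coefficient limit
  have hcoef : Tendsto (fun c₂ : ℝ => c₂ - c₁ - β - μ / q) l
      (nhds (0 - β - μ / q)) :=
    (hsub.sub tendsto_const_nhds).sub tendsto_const_nhds
  -- ratio W(ε)/W(c₂)
  have hWr : Tendsto (fun c₂ : ℝ => W (c₂ - c₁) / W c₂) l
      (nhds (W 0 / W c₁)) :=
    hWε.div hWc hWc₁pos.ne'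
  -- limit of f
  set A : ℝ := -(-(μ / q)) + (0 - β - μ / q) * 1
      - ((0 - β - μ / q) * Z c₁ - R c₁) * (W 0 / W c₁) with hA
  have hft : Tendsto (fun c₂ : ℝ => f c₁ c₂) l (nhds A) := by
    have : Tendsto (fun c₂ : ℝ =>
        -R (c₂ - c₁) + (c₂ - c₁ - β - μ / q) * Z (c₂ - c₁)
          - ((c₂ - c₁ - β - μ / q) * Z c₂ - R c₂) * (W (c₂ - c₁) / W c₂)) l
        (nhds A) := by
      exact (hRε.neg.add (hcoef.mul hZε)).sub
        (((hcoef.mul hZc).sub hRc).mul hWr)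
    simpa only [← hf] using this
  -- limit of g
  set B : ℝ := 1 - 1 + Z c₁ * (W 0 / W c₁) with hB
  have hBpos : 0 < B := by
    rw [hB]
    have := mul_pos hZc₁pos (div_pos hW0 hWc₁pos)
    linarith
  have hgt : Tendsto (fun c₂ : ℝ => g c₁ c₂) l (nhds B) := by
    have : Tendsto (fun c₂ : ℝ =>
        1 - Z (c₂ - c₁) + Z c₂ * (W (c₂ - c₁) / W c₂)) l (nhds B) :=
      (tendsto_const_nhds.sub hZε).add (hZc.mul hWr)
    simpa only [← hg] using this
  -- limit of G
  have hGt : Tendsto (fun c₂ : ℝ => G c₁ c₂) l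
      (nhds ((A / B + c₁ - c₁ - β - μ / q) * Z c₁ - R c₁)) := by
    have : Tendsto (fun c₂ : ℝ =>
        (f c₁ c₂ / g c₁ c₂ + c₂ - c₁ - β - μ / q) * Z c₂ - R c₂) l
        (nhds ((A / B + c₁ - c₁ - β - μ / q) * Z c₁ - R c₁)) := by
      exact (((((hft.div hgt hBpos.ne').add hid).sub tendsto_const_nhds).sub
        tendsto_const_nhds).sub tendsto_const_nhds).mul hZc |>.sub hRc
    have heq : (fun c₂ : ℝ => G c₁ c₂) = fun c₂ : ℝ =>
        (f c₁ c₂ / g c₁ c₂ + c₂ - c₁ - β - μ / q) * Z c₂ - R c₂ := by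
      funext c₂
      rw [hG, hγ, hvbar]
    rw [heq]
    exact this
  -- identify the limit value
  have hval : (A / B + c₁ - c₁ - β - μ / q) * Z c₁ - R c₁
      = -β * W c₁ / W 0 := by
    rw [hA, hB]
    field_simp
    ring
  rw [hval] at hGt
  have hneg : -β * W c₁ / W 0 < 0 :=
    div_neg_of_neg_of_pos (by nlinarith) hW0
  exact ⟨hGt, hneg, hGt.eventually_lt_const hneg⟩
end

section
/- Let $v:(0,\infty)\to\mathbb{R}$ be continuous on $(0,\infty)$, differentiable except at $c_2^*>0$, with $v'(c_2^*-)<1=v'(c_2^*+)$ and $v(x)=x+K$ for $x\ge c_2^*$ (some constant $K$). Suppose an operator of the form $(\mathcal{L}-q)v(x) := -\mathfrak d\, v'(x) + \int_0^\infty[v(x+z)-v(x)]\nu(dz) - qv(x)$ (with $\mathfrak d>0$, $\nu$ a finite measure on $(0,\infty)$, $q>0$) satisfies $(\mathcal L - q)v(x)=0$ for $0<x<c_2^*$. Then $(\mathcal L-q)v(c_2^*+)<0$, and if additionally $x\mapsto \mathcal L v(x)$ is constant on $(c_2^*,\infty)$ and $v$ is increasing there, then $(\mathcal L-q)v(x)\le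 0$ for all $x> c_2^*$. -/
open Set Filter MeasureTheory

theorem stmt_18 (q d K c₂ dl : ℝ) (hq : 0 < q) (hd : 0 < d) (hc₂ : 0 < c₂)
    (ν : Measure ℝ) [IsFiniteMeasure ν] (hν : ν (Iic 0) = 0)
    (v : ℝ → ℝ)
    (hcont : ContinuousOn v (Ioi 0))
    (hdiff : ∀ x, 0 < x → x ≠ c₂ → DifferentiableAt ℝ v x)
    (hlin : ∀ x, c₂ ≤ x → v x = x + K)
    (hkink : HasDerivWithinAt v dl (Iio c₂) c₂) (hdl : dl < 1)
    (hint : ∀ x > (0:ℝ), Integrable (fun z => v (x + z) - v x) ν)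
    (F : ℝ → ℝ)
    (hF : ∀ x, F x =
      -d * deriv v x + (∫ z, (v (x + z) - v x) ∂ν) - q * v x)
    (hgen : ∀ x ∈ Ioo (0:ℝ) c₂, F x = 0)
    (hLconst : ∀ x y, c₂ < x → c₂ < y →
      -d * deriv v x + (∫ z, (v (x + z) - v x) ∂ν)
        = -d * deriv v y + (∫ z, (v (y + z) - v y) ∂ν))
    (hvmono : StrictMonoOn v (Ioi c₂)) :
    (∃ ℓ : ℝ, ℓ < 0 ∧ Tendsto F (nhdsWithin c₂ (Ioi c₂)) (nhds ℓ)) ∧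
    ∀ x, c₂ < x → F x ≤ 0 := by
  -- a.e. positivity of jumps
  have hz : ∀ᵐ z ∂ν, 0 < z := by
    rw [ae_iff]
    convert hν using 2
    ext z; simp [not_lt]
  -- continuity points
  have hva : ∀ t : ℝ, 0 < t → ContinuousAt v t := fun t ht =>
    hcont.continuousAt (isOpen_Ioi.mem_nhds ht)
  set A : ℝ := ∫ z, z ∂ν with hA
  -- integral is constant ∫ z dν for x ≥ c₂
  have hIconst : ∀ x, c₂ ≤ x → (∫ z, (v (x + z) - v x) ∂ν) = A := by
    intro x hx
    refine integral_congr_ae ?_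
    filter_upwards [hz] with z hz0
    rw [hlin (x + z) (by linarith), hlin x hx]; ring
  -- z is ν-integrable
  have hid : Integrable (fun z : ℝ => z) ν := by
    refine (hint c₂ hc₂).congr ?_
    filter_upwards [hz] with z hz0
    rw [hlin (c₂ + z) (by linarith), hlin c₂ le_rfl]; ring
  -- derivative is 1 above c₂
  have hderiv1 : ∀ x, c₂ < x → deriv v x = 1 := by
    intro x hx
    have he : v =ᶠ[nhds x] fun t => t + K := by
      filter_upwards [isOpen_Ioi.mem_nhds hx] with t ht using hlin t (le_of_lt ht)
    rw [he.deriv_eq]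
    simp
  -- dominated convergence: integral term is left-continuous at c₂
  obtain ⟨M, hM⟩ : ∃ M, ∀ t ∈ Icc (c₂/2) (3*c₂/2), ‖v t‖ ≤ M :=
    isCompact_Icc.exists_bound_of_continuousOn
      (hcont.mono (fun t ht => lt_of_lt_of_le (by linarith) ht.1))
  have hM0 : 0 ≤ M := le_trans (norm_nonneg _) (hM c₂ ⟨by linarith, by linarith⟩)
  have hmemIoo : Ioo (c₂/2) c₂ ∈ nhdsWithin c₂ (Iio c₂) :=
    Ioo_mem_nhdsLT_of_mem ⟨by linarith, le_rfl⟩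
  have hIt : Tendsto (fun x => ∫ z, (v (x + z) - v x) ∂ν)
      (nhdsWithin c₂ (Iio c₂)) (nhds A) := by
    have := MeasureTheory.tendsto_integral_filter_of_dominated_convergence
      (μ := ν) (l := nhdsWithin c₂ (Iio c₂))
      (F := fun x z => v (x + z) - v x) (f := fun z => v (c₂ + z) - v c₂)
      (fun z => z + (c₂ + |K| + 2*M))
      (by
        filter_upwards [hmemIoo] with x hx
        exact (hint x (by have := hx.1; linarith)).aestronglyMeasurable)
      (by
        filter_upwards [hmemIoo] with x hx
        filter_upwards [hz] with z hz0
        have hx1 : c₂/2 < x := hx.1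
        have hx2 : x < c₂ := hx.2
        have hvx : ‖v x‖ ≤ M := hM x ⟨le_of_lt hx1, by linarith⟩
        have hvxz : ‖v (x + z)‖ ≤ z + c₂ + |K| + M := by
          rcases le_or_gt (x + z) (3*c₂/2) with h | h
          · have h2 := hM (x + z) ⟨by linarith, h⟩
            have := abs_nonneg K
            linarith
          · rw [hlin (x + z) (by linarith)]
            calc ‖x + z + K‖ ≤ ‖x + z‖ + ‖K‖ := norm_add_le _ _
              _ = (x + z) + |K| := by rw [Real.norm_eq_abs, abs_of_pos (by linarith)]; rfl
              _ ≤ z + c₂ + |K| + M := by linarith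
        calc ‖v (x + z) - v x‖ ≤ ‖v (x + z)‖ + ‖v x‖ := norm_sub_le _ _
          _ ≤ z + (c₂ + |K| + 2*M) := by linarith)
      (hid.add (integrable_const _))
      (by
        filter_upwards [hz] with z hz0
        have t1 : Tendsto (fun x : ℝ => v (x + z)) (nhdsWithin c₂ (Iio c₂))
            (nhds (v (c₂ + z))) := by
          refine ((hva (c₂ + z) (by linarith)).tendsto.comp ?_).mono_left
            nhdsWithin_le_nhds
          exact (continuous_id.add continuous_const).tendsto c₂
        have t2 : Tendsto v (nhdsWithin c₂ (Iio c₂)) (nhds (v c₂)) :=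
          ((hva c₂ hc₂).tendsto).mono_left nhdsWithin_le_nhds
        exact t1.sub t2)
    rwa [hIconst c₂ le_rfl] at this
  -- deriv v tends to (A - q v c₂)/d from the left
  have hvc : Tendsto v (nhdsWithin c₂ (Iio c₂)) (nhds (v c₂)) :=
    ((hva c₂ hc₂).tendsto).mono_left nhdsWithin_le_nhds
  have hderivlim : Tendsto (deriv v) (nhdsWithin c₂ (Iio c₂))
      (nhds ((A - q * v c₂) / d)) := by
    refine Tendsto.congr' ?_ ((hIt.sub (hvc.const_mul q)).div_const d)
    filter_upwards [hmemIoo] with x hx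
    have h0 := hgen x ⟨by have := hx.1; linarith, hx.2⟩
    rw [hF x] at h0
    field_simp
    linarith
  -- slope tends to dl (kink)
  have hslope_dl : Tendsto (slope v c₂) (nhdsWithin c₂ (Iio c₂)) (nhds dl) := by
    have := hasDerivWithinAt_iff_tendsto_slope.mp hkink
    rwa [Set.diff_singleton_eq_self (by simp)] at this
  -- MVT: slope equals deriv at intermediate points
  have hMVT : ∀ x ∈ Ioo (0:ℝ) c₂, ∃ ξ ∈ Ioo x c₂, deriv v ξ = slope v c₂ x := by
    intro x hx
    obtain ⟨ξ, hξ, hξ'⟩ := exists_hasDerivAt_eq_slope v (deriv v) hx.2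
      (hcont.mono (fun t ht => lt_of_lt_of_le hx.1 ht.1))
      (fun t ht => (hdiff t (hx.1.trans ht.1) (ne_of_lt ht.2)).hasDerivAt)
    refine ⟨ξ, hξ, ?_⟩
    rw [hξ', slope_def_field]
    rw [← neg_sub (v c₂) (v x), ← neg_sub c₂ x, neg_div_neg_eq]
  classical
  set ξf : ℝ → ℝ := fun x => if hx : x ∈ Ioo (0:ℝ) c₂ then (hMVT x hx).choose else c₂
    with hξfdef
  have hξf : ∀ x (hx : x ∈ Ioo (0:ℝ) c₂),
      ξf x ∈ Ioo x c₂ ∧ deriv v (ξf x) = slope v c₂ x := by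
    intro x hx
    simp only [hξfdef, dif_pos hx]
    exact ⟨(hMVT x hx).choose_spec.1, (hMVT x hx).choose_spec.2.symm ▸ rfl⟩
  have hmemIoo0 : Ioo (0:ℝ) c₂ ∈ nhdsWithin c₂ (Iio c₂) :=
    Ioo_mem_nhdsLT_of_mem ⟨hc₂, le_rfl⟩
  have hξt : Tendsto ξf (nhdsWithin c₂ (Iio c₂)) (nhdsWithin c₂ (Iio c₂)) := by
    rw [tendsto_nhdsWithin_iff]
    constructor
    · refine tendsto_of_tendsto_of_tendsto_of_le_of_le'
        (tendsto_id.mono_right nhdsWithin_le_nhds) tendsto_const_nhds ?_ ?_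
      · filter_upwards [hmemIoo0] with x hx using le_of_lt (hξf x hx).1.1
      · filter_upwards [hmemIoo0] with x hx using le_of_lt (hξf x hx).1.2
    · filter_upwards [hmemIoo0] with x hx using (hξf x hx).1.2
  have hslope_L : Tendsto (slope v c₂) (nhdsWithin c₂ (Iio c₂))
      (nhds ((A - q * v c₂) / d)) := by
    refine Tendsto.congr' ?_ (hderivlim.comp hξt)
    filter_upwards [hmemIoo0] with x hx using (hξf x hx).2
  have hLdl : (A - q * v c₂) / d = dl := tendsto_nhds_unique hslope_L hslope_dl
  have hvc2 : v c₂ = c₂ + K := hlin c₂ le_rfl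
  have hkey : A - q * (c₂ + K) = d * dl := by
    rw [hvc2] at hLdl
    field_simp at hLdl
    linarith
  -- the value of F just above c₂
  have hFval : ∀ x, c₂ < x → F x = -d + A - q * (x + K) := by
    intro x hx
    rw [hF x, hderiv1 x hx, hIconst x hx.le, hlin x hx.le]
    ring
  have hddl : d * dl < d := by nlinarith
  refine ⟨⟨-d + A - q * (c₂ + K), by linarith, ?_⟩, ?_⟩
  · have hc : Continuous (fun x : ℝ => -d + A - q * (x + K)) := by fun_prop
    refine ((hc.tendsto c₂).mono_left nhdsWithin_le_nhds).congr' ?_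
    filter_upwards [self_mem_nhdsWithin] with x (hx : x ∈ Ioi c₂)
    exact (hFval x hx).symm
  · intro x hx
    rw [hFval x hx]
    nlinarith
end
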